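/- Let π = (π_s : s ∈ S) be strictly positive with ∑_{s∈S} π_s · E_s(T) = 1, and define the probability measure ℙ on I^ℕ by ℙ(B) = ∑_{s∈S} π_s ∑_{n≥0} P_s({T > n} ∩ Θ_n^{-1}B). Then, without any further hypothesis, for every m ≥ 0 and every word (i_0, …, i_m) ∈ I^{m+1} with i_0 ∈ I \ S, the stationarity identity ℙ(X_l = i_l, l = 0,…,m) = ∑_{j∈I} ℙ(X_0 = j, X_{l+1} = i_l, l = 0,…,m) holds. -/

import Mathlib

/-!
For each `μ = P_s` the excursion measure `ν_μ(B) = ∑ₙ μ({T > n} ∩ Θ_n⁻¹ B)`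
is invariant under `B ↦ Θ_1⁻¹ B` as long as the first symbol of every path of `B` lies outside
`S`. Indeed `ν_μ(Θ_1⁻¹ B) = ∑_{n ≥ 1} μ({T > n - 1} ∩ Θ_n⁻¹ B)`; on `Θ_n⁻¹ B` we have `X_n ∉ S`,
so `T ≠ n` and `{T > n - 1}` may be replaced by `{T > n}`, while the missing `n = 0` term of
`ν_μ(B)` vanishes because `X_0 = s ∈ S` almost surely. Summing over `j` on the right-hand side
of the claim only removes the constraint on `X_0`, which leaves `ℙ(Θ_1⁻¹ B)`.
-/

open MeasureTheory Filter
open scoped ENNReal NNReal ENat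

variable {I : Type*} [MeasurableSpace I]

/-- The shift map `Θ_q` on sequences: `(Θ_q x) n = x (n + q)`. -/
def shiftI (q : ℕ) (x : ℕ → I) : ℕ → I := fun n => x (n + q)

/-- The hitting time of a different class:
`T(x) = inf {n > 0 : x n ∈ S \ C(x 0)}` (with `inf ∅ = ∞`), where the class `C(x 0)` is
taken with respect to the equivalence relation `sim`. -/
noncomputable def hitT (S : Finset I) (sim : I → I → Prop) (x : ℕ → I) : ℕ∞ :=
  sInf ((fun n : ℕ => (n : ℕ∞)) '' {n : ℕ | 0 < n ∧ x n ∈ S ∧ ¬ sim (x 0) (x n)})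

/-- The expectation `E(T)` of the hitting time `T` under `P`. -/
noncomputable def hitET (S : Finset I) (sim : I → I → Prop) (P : Measure (ℕ → I)) : ℝ≥0∞ :=
  ∫⁻ x, (hitT S sim x : ℝ≥0∞) ∂P

/-- The measure `ℙ(B) = ∑_{s ∈ S} π_s ∑_{n ≥ 0} P_s({T > n} ∩ Θ_n⁻¹ B)`. -/
noncomputable def lawP (S : Finset I) (sim : I → I → Prop) (π : I → ℝ≥0)
    (P : I → Measure (ℕ → I)) : Measure (ℕ → I) :=
  ∑ s ∈ S, π s •
    Measure.sum (fun n : ℕ => ((P s).restrict {x | (n : ℕ∞) < hitT S sim x}).map (shiftI n))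


section Excursion

variable {S : Finset I} {sim : I → I → Prop}

lemma measurable_shiftI (q : ℕ) : Measurable (shiftI (I := I) q) :=
  measurable_pi_lambda _ fun _ => measurable_pi_apply _

omit [MeasurableSpace I] in
lemma shiftI_one_shiftI (n : ℕ) (x : ℕ → I) : shiftI 1 (shiftI n x) = shiftI (n + 1) x := by
  funext k
  simp only [shiftI, add_assoc, add_comm 1 n]

omit [MeasurableSpace I] in
lemma hitT_ne_of_notMem {x : ℕ → I} {n : ℕ} (hx : x n ∉ S) : hitT S sim x ≠ n := by
  intro h
  have hne : ((fun k : ℕ => (k : ℕ∞)) ''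
      {k : ℕ | 0 < k ∧ x k ∈ S ∧ ¬ sim (x 0) (x k)}).Nonempty := by
    by_contra he
    rw [Set.not_nonempty_iff_eq_empty] at he
    rw [hitT, he, sInf_empty] at h
    exact ENat.top_ne_natCast n h
  have hmem : hitT S sim x ∈ _ := csInf_mem hne
  rw [h] at hmem
  obtain ⟨k, hk, hkn⟩ := hmem
  exact hx (Nat.cast_injective hkn ▸ hk.2.1)

omit [MeasurableSpace I] in
lemma lt_hitT_iff_succ_lt_hitT {x : ℕ → I} {n : ℕ} (hx : x (n + 1) ∉ S) :
    (n : ℕ∞) < hitT S sim x ↔ ((n + 1 : ℕ) : ℕ∞) < hitT S sim x := by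
  rw [← ENat.add_one_le_iff (ENat.natCast_ne_top n), ← Nat.cast_succ]
  exact ⟨fun h => h.lt_of_ne (hitT_ne_of_notMem hx).symm, le_of_lt⟩

variable (S sim) in
noncomputable def excursionMeasure (μ : Measure (ℕ → I)) : Measure (ℕ → I) :=
  Measure.sum fun n : ℕ => (μ.restrict {x | (n : ℕ∞) < hitT S sim x}).map (shiftI n)

lemma lawP_eq_sum_excursionMeasure (π : I → ℝ≥0) (P : I → Measure (ℕ → I)) :
    lawP S sim π P = ∑ s ∈ S, π s • excursionMeasure S sim (P s) :=
  rfl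

lemma excursionMeasure_apply (μ : Measure (ℕ → I)) {A : Set (ℕ → I)} (hA : MeasurableSet A) :
    excursionMeasure S sim μ A
      = ∑' n : ℕ, μ (shiftI n ⁻¹' A ∩ {x | (n : ℕ∞) < hitT S sim x}) := by
  rw [excursionMeasure, Measure.sum_apply _ hA]
  refine tsum_congr fun n => ?_
  rw [Measure.map_apply (measurable_shiftI n) hA,
    Measure.restrict_apply (measurable_shiftI n hA)]

lemma excursionMeasure_preimage_shiftI_one {μ : Measure (ℕ → I)} (hμ : ∀ᵐ x ∂μ, x 0 ∈ S)
    {B : Set (ℕ → I)} (hB : MeasurableSet B) (hBS : ∀ x ∈ B, x 0 ∉ S) :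
    excursionMeasure S sim μ (shiftI 1 ⁻¹' B) = excursionMeasure S sim μ B := by
  have hterm : ∀ n : ℕ, shiftI n ⁻¹' (shiftI 1 ⁻¹' B) ∩ {x | (n : ℕ∞) < hitT S sim x}
      = shiftI (n + 1) ⁻¹' B ∩ {x | ((n + 1 : ℕ) : ℕ∞) < hitT S sim x} := by
    intro n
    ext x
    simp only [Set.mem_inter_iff, Set.mem_preimage, Set.mem_ofPred_eq, shiftI_one_shiftI]
    refine and_congr_right fun hx => lt_hitT_iff_succ_lt_hitT ?_
    simpa [shiftI] using hBS _ hx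
  have hzero : μ (shiftI 0 ⁻¹' B ∩ {x | ((0 : ℕ) : ℕ∞) < hitT S sim x}) = 0 :=
    measure_mono_null (fun x hx => hBS _ hx.1) (ae_iff.mp hμ)
  symm
  rw [excursionMeasure_apply μ hB, excursionMeasure_apply μ (measurable_shiftI 1 hB),
    tsum_eq_zero_add' ENNReal.summable, hzero, zero_add]
  simp_rw [hterm]

end Excursion

lemma sum_measure_coord_zero_and_mem [Fintype I] [MeasurableSingletonClass I]
    (ν : Measure (ℕ → I)) (A : Set (ℕ → I)) :
    ∑ j : I, ν {x | x 0 = j ∧ x ∈ A} = ν A := by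
  have hfib : ∀ j : I, MeasurableSet ((fun x : ℕ → I => x 0) ⁻¹' {j}) :=
    fun j => measurable_pi_apply 0 (measurableSet_singleton j)
  have h := sum_measure_preimage_singleton (μ := ν.restrict A) Finset.univ fun j _ => hfib j
  rw [Finset.coe_univ, Set.preimage_univ, Measure.restrict_apply_univ] at h
  rw [← h]
  exact Finset.sum_congr rfl fun j _ => (Measure.restrict_apply (hfib j)).symm

lemma measurableSet_cylinder [MeasurableSingletonClass I] (m : ℕ) (w : ℕ → I) :
    MeasurableSet {x : ℕ → I | ∀ l ≤ m, x l = w l} := by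
  simp only [Set.ofPred_forall]
  exact .iInter fun l => .iInter fun _ => measurable_pi_apply l (measurableSet_singleton _)

lemma ae_apply_zero_eq_of_measure_eq_one [MeasurableSingletonClass I] {μ : Measure (ℕ → I)}
    [IsProbabilityMeasure μ] {s : I} (h : μ {x | x 0 = s} = 1) : ∀ᵐ x ∂μ, x 0 = s := by
  have hmeas : MeasurableSet {x : ℕ → I | x 0 = s} :=
    (measurableSet_singleton s).preimage (measurable_pi_apply 0)
  rw [ae_iff_measure_eq hmeas.nullMeasurableSet, h, measure_univ]

theorem stmt_7_general [Fintype I] [MeasurableSingletonClass I]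
    (S : Finset I)
    (sim : I → I → Prop)
    (P : I → Measure (ℕ → I)) (hprob : ∀ s ∈ S, IsProbabilityMeasure (P s))
    (hstart : ∀ s ∈ S, P s {x | x 0 = s} = 1)
    (π : I → ℝ≥0) :
    ∀ (m : ℕ) (w : ℕ → I), w 0 ∉ S →
      lawP S sim π P {x | ∀ l ≤ m, x l = w l} =
        ∑ j : I, lawP S sim π P {x | x 0 = j ∧ ∀ l ≤ m, x (l + 1) = w l} := by
  intro m w hw
  set B : Set (ℕ → I) := {x | ∀ l ≤ m, x l = w l}
  have hBS : ∀ x ∈ B, x 0 ∉ S := fun x hx => hx 0 m.zero_le ▸ hw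
  have hRHS : ∑ j : I, lawP S sim π P {x | x 0 = j ∧ ∀ l ≤ m, x (l + 1) = w l}
      = lawP S sim π P (shiftI 1 ⁻¹' B) :=
    sum_measure_coord_zero_and_mem _ _
  rw [hRHS, lawP_eq_sum_excursionMeasure]
  simp only [Measure.coe_finsetSum, Finset.sum_apply, Measure.smul_apply]
  refine Finset.sum_congr rfl fun s hs => ?_
  have := hprob s hs
  have hstartS : ∀ᵐ x ∂P s, x 0 ∈ S :=
    (ae_apply_zero_eq_of_measure_eq_one (hstart s hs)).mono fun x hx => hx ▸ hs
  rw [excursionMeasure_preimage_shiftI_one hstartS (measurableSet_cylinder m w) hBS]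

/-- Without any further hypothesis, the stationarity identity holds at cylinders whose first
symbol lies outside `S`:
`ℙ(X_l = i_l, l = 0,…,m) = ∑_{j ∈ I} ℙ(X_0 = j, X_{l+1} = i_l, l = 0,…,m)`. -/
theorem stmt_7 [Fintype I] [MeasurableSingletonClass I]
    (S : Finset I) (hS : S.Nonempty) (hSc : ∃ i : I, i ∉ S)
    (sim : I → I → Prop) (hsim : Equivalence sim)
    (P : I → Measure (ℕ → I)) (hprob : ∀ s ∈ S, IsProbabilityMeasure (P s))
    (hstart : ∀ s ∈ S, P s {x | x 0 = s} = 1)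
    (hTfin : ∀ s ∈ S, P s {x | hitT S sim x < ⊤} = 1)
    (π : I → ℝ≥0) (hπ : ∀ s ∈ S, 0 < π s)
    (hnorm : ∑ s ∈ S, (π s : ℝ≥0∞) * hitET S sim (P s) = 1) :
    ∀ (m : ℕ) (w : ℕ → I), w 0 ∉ S →
      lawP S sim π P {x | ∀ l ≤ m, x l = w l} =
        ∑ j : I, lawP S sim π P {x | x 0 = j ∧ ∀ l ≤ m, x (l + 1) = w l} :=
  stmt_7_general S sim P hprob hstart π
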